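/- arXiv:2401.08203 — 3 statements merged into one kernel-verified Lean document; each statement's English description precedes it below -/
import Mathlib

section
/- Let H be a κ-monoid, x ∈ H, and (λ_i)_{i∈I} a family of cardinals with |I| ≤ κ and λ_i ≤ κ for all i. Then (Σ_{i∈I} λ_i)·x = Σ_{i∈I} (λ_i·x), where the sum of cardinals Σ_{i∈I} λ_i is assumed to be at most κ. -/
open scoped Classical

universe u v w

/-- A κ-monoid (Definition 2.1 of the paper), with the index cardinal κ modelled
by an (infinite) index type `ι`.  `base` plays the role of the element `0 ∈ κ`. -/
structure KappaMonoid (ι : Type u) (H : Type v) where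
  zero : H
  base : ι
  sum : (ι → H) → H
  /-- (A1) -/
  sum_single : ∀ x : ι → H, (∀ i, i ≠ base → x i = zero) → sum x = x base
  /-- (A2) -/
  sum_flatten : ∀ (x : ι × ι → H) (π : ι × ι ≃ ι),
    sum (fun i => sum fun j => x (i, j)) = sum fun k => x (π.symm k)

namespace KappaMonoid

variable {ι : Type u} {H : Type v}

/-- The family with value `a` at `i`, `b` at `j`, and `0` elsewhere. -/
noncomputable def pairFam (M : KappaMonoid ι H) (i j : ι) (a b : H) : ι → H :=
  fun k => if k = i then a else if k = j then b else M.zero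

/-- The induced binary addition `a + b` on a κ-monoid. -/
noncomputable def add [Nontrivial ι] (M : KappaMonoid ι H) (a b : H) : H :=
  M.sum (M.pairFam M.base (Classical.choose (exists_ne M.base)) a b)

/-- `α·a`, where the cardinal `α` is realized as the cardinality of `s ⊆ ι`:
the κ-sum of the family equal to `a` on `s` and `0` elsewhere. -/
noncomputable def smulSet (M : KappaMonoid ι H) (s : Set ι) (a : H) : H :=
  M.sum fun i => if i ∈ s then a else M.zero

/-- The κ-sum of the subfamily of `x` supported on `s` (padding by `0`). -/
noncomputable def sumOn (M : KappaMonoid ι H) (s : Set ι) (x : ι → H) : H :=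
  M.sum fun i => if i ∈ s then x i else M.zero

end KappaMonoid

/-!
By (A1) applied row by row, the right-hand side is the double κ-sum of `x` over
`A = ⋃ᵢ {e i} × sᵢ ⊆ κ × κ`, and (A2) flattens it along any bijection `κ × κ ≃ κ` into a
single κ-sum of `x` over a set of size `#A = Σᵢ λᵢ`. It remains to see that `α·x` depends only
on `α`. The set `s ⊆ κ` gives the same sum as `s × {0} ⊆ κ × κ`, whose complement has size `κ`;
so two such sets of equal size are matched by a permutation of `κ × κ`, and composing the
flattening bijection with that permutation does not change the flattened sum.
-/

open Cardinal Set Function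

theorem Infinite.nonempty_prod_self_equiv (α : Type u) [Infinite α] : Nonempty (α × α ≃ α) :=
  Cardinal.eq.mp (by rw [mk_prod, lift_id, mul_eq_self (aleph0_le_mk α)])

theorem Equiv.exists_perm_mem_iff {α : Type u} {A B : Set α} (h : #A = #B)
    (hc : #(Aᶜ : Set α) = #(Bᶜ : Set α)) : ∃ σ : Perm α, ∀ p, σ p ∈ B ↔ p ∈ A := by
  obtain ⟨f⟩ := Cardinal.eq.mp h
  obtain ⟨g⟩ := Cardinal.eq.mp hc
  refine ⟨Equiv.subtypeCongr f g, fun p => ?_⟩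
  by_cases hp : p ∈ A
  · simp [Equiv.subtypeCongr, Equiv.sumCompl, hp]
  · have hg : (g ⟨p, hp⟩ : α) ∉ B := (g ⟨p, hp⟩).2
    simpa [Equiv.subtypeCongr, Equiv.sumCompl, hp] using hg

theorem Cardinal.mk_prod_singleton {α : Type u} (s : Set α) (b : α) :
    #(s ×ˢ ({b} : Set α)) = #s := by
  rw [prod_singleton, mk_image_eq fun _ _ h => (Prod.ext_iff.mp h).1]

theorem Cardinal.mk_singleton_prod {α : Type u} (a : α) (t : Set α) :
    #(({a} : Set α) ×ˢ t) = #t := by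
  rw [singleton_prod, mk_image_eq (Prod.mk_right_injective a)]

theorem Cardinal.mk_compl_prod_singleton {α : Type u} [Infinite α] (s : Set α) (b : α) :
    #((s ×ˢ ({b} : Set α))ᶜ : Set (α × α)) = #α := by
  obtain ⟨c, hc⟩ := exists_ne b
  refine le_antisymm ?_ ?_
  · calc #((s ×ˢ ({b} : Set α))ᶜ : Set (α × α)) ≤ #(α × α) := mk_set_le _
      _ = #α := by rw [mk_prod, lift_id, mul_eq_self (aleph0_le_mk α)]
  · calc #α = #((Set.univ : Set α) ×ˢ ({c} : Set α)) := by rw [mk_prod_singleton, mk_univ]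
      _ ≤ _ := mk_le_mk_of_subset fun p hp hps =>
        hc (hp.2.symm.trans (mem_singleton_iff.mp (mem_prod.mp hps).2))

theorem Cardinal.mk_iUnion_singleton_prod {α I : Type u} (e : I ↪ α) (s : I → Set α) :
    #(⋃ i, ({e i} : Set α) ×ˢ s i) = sum fun i => #(s i) := by
  rw [mk_iUnion_eq_sum_mk]
  · simp only [mk_singleton_prod]
  · intro i j hij
    exact disjoint_left.mpr fun p hpi hpj => hij (e.injective (hpi.1.symm.trans hpj.1))

namespace KappaMonoid

variable {ι : Type u} {H : Type v} (M : KappaMonoid ι H)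

/-- `#A · a` for `A ⊆ κ × κ`, computed as an iterated κ-sum. -/
noncomputable def smulSetProd (A : Set (ι × ι)) (a : H) : H :=
  M.sum fun i => M.sum fun j => if (i, j) ∈ A then a else M.zero

theorem sum_zero : M.sum (fun _ => M.zero) = M.zero :=
  M.sum_single _ fun _ _ => rfl

theorem smulSetProd_eq_smulSet_preimage (A : Set (ι × ι)) (a : H) (π : ι × ι ≃ ι) :
    M.smulSetProd A a = M.smulSet (π.symm ⁻¹' A) a :=
  M.sum_flatten (fun p => if p ∈ A then a else M.zero) π

theorem smulSetProd_prod_base (s : Set ι) (a : H) :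
    M.smulSetProd (s ×ˢ {M.base}) a = M.smulSet s a := by
  refine congrArg M.sum (funext fun i => ?_)
  by_cases hi : i ∈ s
  · rw [M.sum_single _ fun j hj => by simp [hj]]
    simp [hi]
  · simp [hi, sum_zero]

theorem smulSetProd_iUnion_singleton_prod {I : Type*} (e : I ↪ ι) (s : I → Set ι) (a : H) :
    M.smulSetProd (⋃ k, {e k} ×ˢ s k) a =
      M.sum (extend e (fun k => M.smulSet (s k) a) fun _ => M.zero) := by
  refine congrArg M.sum (funext fun i => ?_)
  by_cases hi : ∃ k, e k = i
  · obtain ⟨k, rfl⟩ := hi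
    rw [e.injective.extend_apply]
    refine congrArg M.sum (funext fun j => if_congr ?_ rfl rfl)
    simp [e.injective.eq_iff]
  · rw [extend_apply' _ _ _ hi]
    refine (congrArg M.sum (funext fun j => if_neg ?_)).trans M.sum_zero
    simp only [mem_iUnion, mem_prod, mem_singleton_iff]
    rintro ⟨k, hk, -⟩
    exact hi ⟨k, hk.symm⟩

theorem smulSetProd_eq_of_perm [Infinite ι] {A B : Set (ι × ι)} (σ : Equiv.Perm (ι × ι))
    (hσ : ∀ p, σ p ∈ B ↔ p ∈ A) (a : H) : M.smulSetProd A a = M.smulSetProd B a := by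
  obtain ⟨π⟩ := Infinite.nonempty_prod_self_equiv ι
  rw [M.smulSetProd_eq_smulSet_preimage A a π,
    M.smulSetProd_eq_smulSet_preimage B a (σ.symm.trans π)]
  congr 1
  ext k
  simp [hσ]

theorem smulSet_eq_of_mk_eq [Infinite ι] {s t : Set ι} (h : #s = #t) (a : H) :
    M.smulSet s a = M.smulSet t a := by
  obtain ⟨σ, hσ⟩ := Equiv.exists_perm_mem_iff (A := s ×ˢ {M.base}) (B := t ×ˢ {M.base})
    (by rw [mk_prod_singleton, mk_prod_singleton, h])
    (by rw [mk_compl_prod_singleton, mk_compl_prod_singleton])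
  rw [← smulSetProd_prod_base, ← smulSetProd_prod_base, M.smulSetProd_eq_of_perm σ hσ]

theorem smulSetProd_eq_smulSet_of_mk_eq [Infinite ι] {A : Set (ι × ι)} {t : Set ι}
    (h : #A = #t) (a : H) : M.smulSetProd A a = M.smulSet t a := by
  obtain ⟨π⟩ := Infinite.nonempty_prod_self_equiv ι
  rw [M.smulSetProd_eq_smulSet_preimage A a π]
  exact M.smulSet_eq_of_mk_eq (by rw [mk_preimage_equiv, h]) a

end KappaMonoid

/-- The index set `I` is realized by the embedding `e : I ↪ ι`, each `λ_i` as `#(s i)` with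
`s i ⊆ ι`, and `Σ_{i∈I} λ_i` as `#t` with `t ⊆ ι`. -/
theorem kappaMonoid_card_sum_smul {ι : Type u} {H : Type v} [Infinite ι]
    (M : KappaMonoid ι H) (x : H) {I : Type u} (e : I ↪ ι)
    (s : I → Set ι) (t : Set ι)
    (ht : Cardinal.mk t = Cardinal.sum fun i => Cardinal.mk (s i)) :
    M.smulSet t x =
      M.sum (Function.extend e (fun i => M.smulSet (s i) x) fun _ => M.zero) := by
  rw [← M.smulSetProd_iUnion_singleton_prod]
  exact (M.smulSetProd_eq_smulSet_of_mk_eq (by rw [ht, mk_iUnion_singleton_prod]) x).symm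
end

section
/- If λ is an uncountable regular cardinal, then two families (x_i)_{i∈κ} and (y_j)_{j∈κ} over a λ⁻-monoid X are λ⁻-braided if and only if there exist partitions (I_μ)_{μ∈κ} and (J_μ)_{μ∈κ} of κ with |I_μ|, |J_μ| < λ such that Σ_{i∈I_μ} x_i = Σ_{j∈J_μ} y_j for all μ ∈ κ. -/
open scoped Classical

universe u v w

/-- A limit element of the well-order (the minimum counts as a limit element). -/
def IsLimitElt {ι : Type u} [Preorder ι] [SuccOrder ι] (μ : ι) : Prop :=
  ¬ ∃ ν, ν < μ ∧ Order.succ ν = μ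

/-- An indexed partition of the index set `ι` (blocks may be empty). -/
def IsIndexedPartition {ι : Type u} (I : ι → Set ι) : Prop :=
  (∀ μ ν, μ ≠ ν → Disjoint (I μ) (I ν)) ∧ (⋃ μ, I μ) = Set.univ

namespace KappaMonoid
variable {ι : Type u} {H : Type v}

/-- Definition 3.1(1): the families `x` and `y`, with entries in the λ⁻-submonoid
`X ⊆ H`, are λ⁻-braided: there are indexed partitions `(I_μ)`, `(J_μ)` of `ι` with
blocks of cardinality `< λ` and braiding families `(u_μ)`, `(v_μ)` in `X` with
`v_μ = 0` at limit elements, such that `Σ_{i∈I_μ} x_i = v_μ + u_μ` and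
`Σ_{j∈J_μ} y_j = v_{μ+1} + u_μ` for all `μ`. -/
noncomputable def Braided [Infinite ι] [LinearOrder ι] [SuccOrder ι]
    (M : KappaMonoid ι H) (lam : Cardinal.{u}) (X : Set H) (x y : ι → H) : Prop :=
  ∃ (I J : ι → Set ι) (u v : ι → H),
    IsIndexedPartition I ∧ IsIndexedPartition J ∧
    (∀ μ, Cardinal.mk (I μ) < lam) ∧ (∀ μ, Cardinal.mk (J μ) < lam) ∧
    (∀ μ, u μ ∈ X) ∧ (∀ μ, v μ ∈ X) ∧
    (∀ μ, IsLimitElt μ → v μ = M.zero) ∧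
    (∀ μ, M.sumOn (I μ) x = M.add (v μ) (u μ)) ∧
    (∀ μ, M.sumOn (J μ) y = M.add (v (Order.succ μ)) (u μ))

/-- `X` is a λ⁻-submonoid of the κ-monoid `H`: it contains `0` and is closed under
sums of families with support of cardinality `< λ`. -/
def IsSubmonoidLT (M : KappaMonoid ι H) (lam : Cardinal.{u}) (X : Set H) : Prop :=
  M.zero ∈ X ∧ ∀ x : ι → H, (∀ i, x i ∈ X) →
    Cardinal.mk {i | x i ≠ M.zero} < lam → M.sum x ∈ X

/-- Definition 3.1(2): the κ-monoid `H` is λ⁻-braided over `X`: `X` generates `H`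
as a κ-monoid, and any two κ-indexed families in `X` with equal κ-sums are
λ⁻-braided. -/
noncomputable def BraidedOver [Infinite ι] [LinearOrder ι] [SuccOrder ι]
    (M : KappaMonoid ι H) (lam : Cardinal.{u}) (X : Set H) : Prop :=
  (∀ h : H, ∃ x : ι → H, (∀ i, x i ∈ X) ∧ M.sum x = h) ∧
  ∀ x y : ι → H, (∀ i, x i ∈ X) → (∀ i, y i ∈ X) →
    M.sum x = M.sum y → M.Braided lam X x y

end KappaMonoid

/-! ### Auxiliary lemmas -/

section Aux

namespace KappaMonoid

variable {ι : Type u} {H : Type v}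

/-- an equiv `ι × ι ≃ ι` exists for infinite `ι` -/
noncomputable def prodEquiv (ι : Type u) [Infinite ι] : ι × ι ≃ ι :=
  Classical.choice (Cardinal.eq.mp (by simp [Cardinal.mul_mk_eq_max]))

theorem sum_comp_perm [Infinite ι] (M : KappaMonoid ι H) (ρ : Equiv.Perm ι) (w : ι → H) :
    M.sum (fun k => w (ρ k)) = M.sum w := by
  have e := prodEquiv ι
  have h1 := M.sum_flatten (fun p => w (e p)) e
  have h2 := M.sum_flatten (fun p => w (e p)) (e.trans ρ.symm)
  simp only [Equiv.symm_trans_apply, Equiv.apply_symm_apply, Equiv.symm_symm] at h1 h2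
  exact h2.symm.trans h1

theorem sum_const_zero (M : KappaMonoid ι H) : M.sum (fun _ => M.zero) = M.zero :=
  M.sum_single (fun _ => M.zero) (fun _ _ => rfl)

theorem sumOn_empty (M : KappaMonoid ι H) (x : ι → H) : M.sumOn ∅ x = M.zero := by
  unfold sumOn
  rw [M.sum_single _ (fun i _ => by simp)]
  simp

theorem add_zero_left [Infinite ι] (M : KappaMonoid ι H) (a : H) :
    M.add M.zero a = a := by
  set c := Classical.choose (exists_ne M.base) with hcdef
  have hc : c ≠ M.base := Classical.choose_spec (exists_ne M.base)
  have key : M.sum (fun k => M.pairFam M.base c M.zero a (Equiv.swap M.base c k))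
      = M.sum (M.pairFam M.base c M.zero a) :=
    M.sum_comp_perm (Equiv.swap M.base c) _
  have h2 : (fun k => M.pairFam M.base c M.zero a (Equiv.swap M.base c k))
      = fun k => if k = M.base then a else M.zero := by
    funext k
    by_cases hk : k = M.base
    · subst hk
      rw [if_pos rfl, Equiv.swap_apply_left, pairFam, if_neg hc, if_pos rfl]
    · by_cases hk2 : k = c
      · subst hk2
        rw [if_neg hk, Equiv.swap_apply_right, pairFam, if_pos rfl]
      · rw [if_neg hk, Equiv.swap_apply_of_ne_of_ne hk hk2, pairFam, if_neg hk, if_neg hk2]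
  have h3 : M.sum (fun k => if k = M.base then a else M.zero) = a := by
    have := M.sum_single (fun k => if k = M.base then a else M.zero) (fun j hj => if_neg hj)
    simpa using this
  rw [h2, h3] at key
  exact key.symm

/-- an auxiliary equiv -/
def baseEquiv (base : ι) : { i // i = base } × ι ≃ ι where
  toFun p := p.2
  invFun j := (⟨base, rfl⟩, j)
  left_inv p := by
    obtain ⟨⟨i, hi⟩, j⟩ := p
    subst hi
    rfl
  right_inv j := rfl

/-- `Φ : ι × ι ≃ ι ⊕ ι` with `Φ (base, j) = inl j`, for infinite `ι`. -/
noncomputable def splitEquiv (ι : Type u) [Infinite ι] (base : ι) :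
    { Φ : ι × ι ≃ ι ⊕ ι // ∀ j, Φ (base, j) = Sum.inl j } := by
  have hne : Nonempty ({ i // i ≠ base } × ι ≃ ι) := by
    refine Cardinal.eq.mp ?_
    rw [Cardinal.mk_prod, Cardinal.lift_id, Cardinal.lift_id]
    have h1 : Cardinal.mk { i // i ≠ base } = Cardinal.mk ι := by
      have h2 : Cardinal.mk ↥({base}ᶜ : Set ι) = Cardinal.mk ι := by
        apply Cardinal.mk_compl_of_infinite
        rw [Cardinal.mk_singleton]
        exact Cardinal.one_lt_aleph0.trans_le (Cardinal.infinite_iff.mp inferInstance)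
      rw [← h2]
      exact Cardinal.mk_congr (Equiv.subtypeEquivRight (fun i => by simp))
    rw [h1]
    simp [Cardinal.mul_mk_eq_max]
  refine ⟨((Equiv.sumCompl (· = base)).symm.prodCongr (Equiv.refl ι)).trans
    ((Equiv.sumProdDistrib _ _ _).trans
      (Equiv.sumCongr (baseEquiv base) (Classical.choice hne))), fun j => ?_⟩
  simp only [Equiv.trans_apply, Equiv.prodCongr_apply, Equiv.coe_refl, Prod.map]
  have h3 : (Equiv.sumCompl (· = base)).symm base = Sum.inl ⟨base, rfl⟩ := by
    rw [Equiv.symm_apply_eq]; rfl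
  rw [h3]
  rfl

/-- Padding a family by zeros along any equiv `ι ⊕ ι ≃ ι` does not change the sum. -/
theorem sum_pad [Infinite ι] (M : KappaMonoid ι H) (E : ι ⊕ ι ≃ ι) (x : ι → H) :
    M.sum (fun k => Sum.elim x (fun _ => M.zero) (E.symm k)) = M.sum x := by
  obtain ⟨Φ, hΦ⟩ := splitEquiv ι M.base
  set π : ι × ι ≃ ι := Φ.trans E with hπ
  have key := M.sum_flatten (fun p => if p.1 = M.base then x p.2 else M.zero) π
  have hL : (fun i => M.sum fun j => if (i, j).1 = M.base then x j else M.zero)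
      = fun i => if i = M.base then M.sum x else M.zero := by
    funext i
    by_cases hi : i = M.base
    · subst hi; simp
    · simp only [hi, if_false]
      exact M.sum_const_zero
  rw [hL] at key
  have hL2 : M.sum (fun i => if i = M.base then M.sum x else M.zero) = M.sum x := by
    have := M.sum_single (fun i => if i = M.base then M.sum x else M.zero)
      (fun j hj => if_neg hj)
    simpa using this
  rw [hL2] at key
  have hR : (fun k => if (π.symm k).1 = M.base then x (π.symm k).2 else M.zero)
      = fun k => Sum.elim x (fun _ => M.zero) (E.symm k) := by
    funext k
    have hπs : π.symm k = Φ.symm (E.symm k) := rfl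
    rcases hk : E.symm k with j | m
    · have : Φ.symm (Sum.inl j) = (M.base, j) := by
        rw [Equiv.symm_apply_eq, hΦ]
      rw [hπs, hk, this]
      simp
    · rw [hπs, hk]
      have hfst : (Φ.symm (Sum.inr m)).1 ≠ M.base := by
        intro hb
        have : Φ (Φ.symm (Sum.inr m)) = Sum.inr m := Φ.apply_symm_apply _
        rw [show Φ.symm (Sum.inr m) = (M.base, (Φ.symm (Sum.inr m)).2) from
          Prod.ext hb rfl] at this
        rw [hΦ] at this
        exact Sum.inl_ne_inr this
      simp [hfst]
  rw [hR] at key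
  exact key.symm

/-- an equiv `ι ⊕ ι ≃ ι` exists for infinite `ι` -/
noncomputable def sumSelfEquiv (ι : Type u) [Infinite ι] : ι ⊕ ι ≃ ι :=
  Classical.choice (Cardinal.eq.mp (by simp [Cardinal.add_mk_eq_max]))

/-- an auxiliary equiv for `sum_partition` -/
def partEquivD (S : ι → Set ι) (m : ι → ι) (hm : ∀ j, j ∈ S (m j))
    (hmu : ∀ j μ, j ∈ S μ → m j = μ) : ι ≃ { p : ι × ι // p.2 ∈ S p.1 } where
  toFun j := ⟨(m j, j), hm j⟩
  invFun d := d.1.2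
  left_inv j := rfl
  right_inv d := by
    obtain ⟨⟨μ, j⟩, hd⟩ := d
    exact Subtype.ext (Prod.ext (hmu j μ hd) rfl)

/-- Generalized associativity: the sum of a family equals the sum of the block sums
of any indexed partition. -/
theorem sum_partition [Infinite ι] (M : KappaMonoid ι H) {S : ι → Set ι}
    (hS : IsIndexedPartition S) (x : ι → H) :
    M.sum x = M.sum (fun μ => M.sumOn (S μ) x) := by
  classical
  have hex : ∀ j : ι, ∃ μ, j ∈ S μ := by
    intro j
    have : j ∈ ⋃ μ, S μ := hS.2 ▸ Set.mem_univ j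
    exact Set.mem_iUnion.mp this
  set m : ι → ι := fun j => Classical.choose (hex j) with hmdef
  have hm : ∀ j, j ∈ S (m j) := fun j => Classical.choose_spec (hex j)
  have hmu : ∀ j μ, j ∈ S μ → m j = μ := by
    intro j μ hj
    by_contra hne
    exact Set.disjoint_left.mp (hS.1 _ _ hne) (hm j) hj
  set D : ι × ι → Prop := fun p => p.2 ∈ S p.1 with hDdef
  set e1 : ι ≃ { p : ι × ι // D p } := partEquivD S m hm hmu with he1
  have hne2 : Nonempty (ι ≃ { p : ι × ι // ¬ D p }) := by
    refine Cardinal.eq.mp (le_antisymm ?_ ?_)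
    · obtain ⟨c, hc⟩ := exists_ne M.base
      set other : ι → ι := fun μ => if μ = M.base then c else M.base with hodef
      have hother : ∀ μ, other μ ≠ μ := by
        intro μ
        by_cases hμ : μ = M.base
        · subst hμ; simpa [hodef] using hc
        · simpa [hodef, hμ] using Ne.symm hμ
      refine Cardinal.mk_le_of_injective (f := fun j =>
        (⟨(other (m j), j), fun hin => hother (m j) (hmu j _ hin).symm⟩ :
          { p : ι × ι // ¬ D p })) ?_
      intro a b hab
      have := congrArg (fun d => d.1.2) hab
      exact this
    · calc Cardinal.mk { p : ι × ι // ¬ D p } ≤ Cardinal.mk (ι × ι) :=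
            Cardinal.mk_subtype_le _
        _ = Cardinal.mk ι := by simp [Cardinal.mul_mk_eq_max]
  set e2 : ι ≃ { p : ι × ι // ¬ D p } := Classical.choice hne2
  set Ψ : ι ⊕ ι ≃ ι × ι := (Equiv.sumCongr e1 e2).trans (Equiv.sumCompl D) with hΨdef
  set E : ι ⊕ ι ≃ ι := sumSelfEquiv ι
  set π : ι × ι ≃ ι := Ψ.symm.trans E with hπdef
  have key := M.sum_flatten (fun p => if p.2 ∈ S p.1 then x p.2 else M.zero) π
  have hL : (fun μ => M.sum fun j => if ((μ, j) : ι × ι).2 ∈ S (μ, j).1 then x j else M.zero)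
      = fun μ => M.sumOn (S μ) x := rfl
  rw [hL] at key
  have hR : (fun k => if (π.symm k).2 ∈ S (π.symm k).1 then x (π.symm k).2 else M.zero)
      = fun k => Sum.elim x (fun _ => M.zero) (E.symm k) := by
    funext k
    have hπs : π.symm k = Ψ (E.symm k) := rfl
    rcases hk : E.symm k with j | a
    · have hΨj : Ψ (Sum.inl j) = (m j, j) := by
        show (Equiv.sumCompl D) (Sum.inl (e1 j)) = (m j, j)
        rw [Equiv.sumCompl_apply_inl, he1]
        rfl
      rw [hπs, hk, hΨj]
      simp [hm j]
    · have hΨa : Ψ (Sum.inr a) = (e2 a).1 := by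
        simp [hΨdef, Equiv.sumCongr_apply]
      rw [hπs, hk, hΨa]
      simp only [Sum.elim_inr]
      exact if_neg (e2 a).2
  rw [hR, M.sum_pad E x] at key
  exact key.symm

/-- Relative version: the partial sum over a disjoint union. -/
theorem sumOn_iUnion [Infinite ι] (M : KappaMonoid ι H) {T : ι → Set ι}
    (hT : ∀ k k', k ≠ k' → Disjoint (T k) (T k')) (x : ι → H) :
    M.sumOn (⋃ k, T k) x = M.sum (fun k => M.sumOn (T k) x) := by
  classical
  set U : Set ι := ⋃ k, T k with hUdef
  set T' : ι → Set ι := fun k => if k = M.base then T M.base ∪ Uᶜ else T k with hT'def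
  have hsub : ∀ k, T k ⊆ U := fun k => Set.subset_iUnion T k
  have hpart : IsIndexedPartition T' := by
    constructor
    · intro k k' hkk'
      have base_case : ∀ k', k' ≠ M.base → Disjoint (T M.base ∪ Uᶜ) (T k') := by
        intro k' hk'
        refine Set.disjoint_union_left.mpr ⟨hT _ _ (Ne.symm hk'), ?_⟩
        exact Set.disjoint_left.mpr (fun a ha ha' => ha (hsub k' ha'))
      by_cases h1 : k = M.base
      · subst h1
        rw [hT'def]
        simp only [if_pos rfl, if_neg (Ne.symm hkk')]
        exact base_case k' (Ne.symm hkk')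
      · by_cases h2 : k' = M.base
        · subst h2
          rw [hT'def]
          simp only [if_pos rfl, if_neg h1]
          exact (base_case k h1).symm
        · rw [hT'def]
          simp only [if_neg h1, if_neg h2]
          exact hT _ _ hkk'
    · apply Set.eq_univ_of_forall
      intro j
      by_cases hj : j ∈ U
      · obtain ⟨k, hk⟩ := Set.mem_iUnion.mp hj
        apply Set.mem_iUnion.mpr
        by_cases h1 : k = M.base
        · subst h1
          exact ⟨M.base, by simp [hT'def, Set.mem_union, hk]⟩
        · exact ⟨k, by simp [hT'def, h1, hk]⟩
      · apply Set.mem_iUnion.mpr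
        exact ⟨M.base, by simp [hT'def, Set.mem_union, hj]⟩
  set x' : ι → H := fun i => if i ∈ U then x i else M.zero with hx'def
  have h1 : M.sumOn U x = M.sum x' := rfl
  have h2 := M.sum_partition hpart x'
  have h3 : (fun k => M.sumOn (T' k) x') = fun k => M.sumOn (T k) x := by
    funext k
    refine congrArg M.sum (funext fun i => ?_)
    by_cases hik : i ∈ T k
    · have hiU : i ∈ U := hsub k hik
      have hiT' : i ∈ T' k := by
        by_cases h1 : k = M.base
        · subst h1; simp [hT'def, hik]
        · simpa [hT'def, h1] using hik
      rw [if_pos hiT', if_pos hik, hx'def]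
      simp [hiU]
    · rw [if_neg hik]
      by_cases hiT' : i ∈ T' k
      · have : i ∉ U := by
          by_cases h1 : k = M.base
          · subst h1
            rw [hT'def] at hiT'
            simp only [if_pos rfl] at hiT'
            rcases hiT' with h | h
            · exact absurd h hik
            · exact h
          · rw [hT'def] at hiT'
            simp only [if_neg h1] at hiT'
            exact absurd hiT' hik
        rw [if_pos hiT', hx'def]
        simp [this]
      · rw [if_neg hiT']
  rw [h1, h2, h3]

end KappaMonoid

end Aux


/-! ### Orbit lemmas for the successor function -/

section Orbit

variable {ι : Type u} [LinearOrder ι] [SuccOrder ι] [NoMaxOrder ι]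

theorem succ_iterate_strictMono (μ : ι) :
    StrictMono (fun n : ℕ => (Order.succ)^[n] μ) :=
  strictMono_nat_of_lt_succ (fun n => by
    rw [Function.iterate_succ_apply']
    exact Order.lt_succ _)

omit [NoMaxOrder ι] in
theorem orbit_exists [WellFoundedLT ι] (ν : ι) :
    ∃ μ n, IsLimitElt μ ∧ (Order.succ)^[n] μ = ν := by
  induction ν using WellFoundedLT.induction with
  | ind ν IH =>
    by_cases h : IsLimitElt ν
    · exact ⟨ν, 0, h, rfl⟩
    · rw [IsLimitElt, not_not] at h
      obtain ⟨ν', hlt, hsucc⟩ := h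
      obtain ⟨μ, n, hμ, hiter⟩ := IH ν' hlt
      exact ⟨μ, n + 1, hμ, by rw [Function.iterate_succ_apply', hiter, hsucc]⟩

theorem orbit_unique : ∀ (n m : ℕ) (μ μ' : ι), IsLimitElt μ → IsLimitElt μ' →
    (Order.succ)^[n] μ = (Order.succ)^[m] μ' → μ = μ' ∧ n = m := by
  intro n
  induction n with
  | zero =>
    intro m μ μ' hμ hμ' h
    cases m with
    | zero => exact ⟨h, rfl⟩
    | succ m =>
      exfalso
      rw [Function.iterate_succ_apply'] at h
      simp only [Function.iterate_zero_apply] at h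
      exact hμ ⟨(Order.succ)^[m] μ', by rw [h]; exact Order.lt_succ _, h.symm⟩
  | succ n IH =>
    intro m μ μ' hμ hμ' h
    cases m with
    | zero =>
      exfalso
      rw [Function.iterate_succ_apply'] at h
      simp only [Function.iterate_zero_apply] at h
      exact hμ' ⟨(Order.succ)^[n] μ, by rw [← h]; exact Order.lt_succ _, h⟩
    | succ m =>
      rw [Function.iterate_succ_apply', Function.iterate_succ_apply'] at h
      obtain ⟨h1, h2⟩ := IH m μ μ' hμ hμ'
        ((Order.succ_strictMono (α := ι)).injective h)
      exact ⟨h1, by rw [h2]⟩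

end Orbit

/-- The "shift" permutation of `ℕ ⊕ ℕ`. -/
def shiftPerm : Equiv.Perm (ℕ ⊕ ℕ) where
  toFun p := match p with
    | .inl n => .inl (n + 1)
    | .inr 0 => .inl 0
    | .inr (n + 1) => .inr n
  invFun p := match p with
    | .inl 0 => .inr 0
    | .inl (n + 1) => .inl n
    | .inr n => .inr (n + 1)
  left_inv p := by
    rcases p with n | n
    · rfl
    · cases n <;> rfl
  right_inv p := by
    rcases p with n | n
    · cases n <;> rfl
    · rfl


namespace KappaMonoid

variable {ι : Type u} {H : Type v}

/-- The sum over a countable disjoint union of blocks, as a κ-sum of the block sums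
spread along an embedding `ℕ ↪ ι`. -/
theorem sum_extend_blocks [Infinite ι] (M : KappaMonoid ι H) (g : ℕ ↪ ι)
    (K : ℕ → Set ι) (hK : ∀ n m, n ≠ m → Disjoint (K n) (K m)) (z : ι → H) :
    M.sumOn (⋃ n : ULift.{u} ℕ, K n.down) z
      = M.sum (Function.extend ⇑g (fun n => M.sumOn (K n) z) (fun _ => M.zero)) := by
  classical
  set T : ι → Set ι := Function.extend ⇑g K (fun _ => ∅) with hT
  have hTg : ∀ n, T (g n) = K n := fun n => g.injective.extend_apply _ _ _
  have hTo : ∀ k, (¬ ∃ n, g n = k) → T k = ∅ := fun k hk => Function.extend_apply' _ _ _ hk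
  have hdisj : ∀ k k', k ≠ k' → Disjoint (T k) (T k') := by
    intro k k' hkk'
    by_cases h1 : ∃ n, g n = k
    · obtain ⟨n, rfl⟩ := h1
      by_cases h2 : ∃ n', g n' = k'
      · obtain ⟨n', rfl⟩ := h2
        rw [hTg, hTg]
        exact hK n n' (fun he => hkk' (by rw [he]))
      · rw [hTo k' h2]
        exact Set.disjoint_empty _
    · rw [hTo k h1]
      exact Set.empty_disjoint _
  have hU : (⋃ k, T k) = ⋃ n : ULift.{u} ℕ, K n.down := by
    ext j
    simp only [Set.mem_iUnion]
    constructor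
    · rintro ⟨k, hk⟩
      by_cases h1 : ∃ n, g n = k
      · obtain ⟨n, rfl⟩ := h1
        rw [hTg] at hk
        exact ⟨⟨n⟩, hk⟩
      · rw [hTo k h1] at hk
        exact absurd hk (Set.notMem_empty j)
    · rintro ⟨⟨n⟩, hn⟩
      exact ⟨g n, by rw [hTg]; exact hn⟩
  rw [← hU, M.sumOn_iUnion hdisj]
  refine congrArg M.sum (funext fun k => ?_)
  by_cases h1 : ∃ n, g n = k
  · obtain ⟨n, rfl⟩ := h1
    rw [hTg, g.injective.extend_apply]
  · rw [hTo k h1, Function.extend_apply' _ _ _ h1, M.sumOn_empty]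

/-- The braiding collapse: if `b 0 = 0` then `Σ_n (b n + a n) = Σ_n (b (n+1) + a n)`. -/
theorem sum_shift [Infinite ι] (M : KappaMonoid ι H) (g : ℕ ↪ ι) (a b : ℕ → H)
    (hb0 : b 0 = M.zero) :
    M.sum (Function.extend ⇑g (fun n => M.add (b n) (a n)) (fun _ => M.zero))
      = M.sum (Function.extend ⇑g (fun n => M.add (b (n + 1)) (a n)) (fun _ => M.zero)) := by
  classical
  set c : ι := Classical.choose (exists_ne M.base) with hcdef
  have hc : c ≠ M.base := Classical.choose_spec (exists_ne M.base)
  obtain ⟨q, hq⟩ := (Set.toFinite ({M.base, c} : Set ι)).infinite_compl.nonempty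
  have hqb : q ≠ M.base := fun h => hq (by simp [h])
  have hqc : q ≠ c := fun h => hq (by simp [h])
  set W : ι → ι → H :=
    Function.extend ⇑g (fun n => M.pairFam M.base c (b n) (a n)) (fun _ _ => M.zero) with hW
  set W' : ι → ι → H :=
    Function.extend ⇑g (fun n => M.pairFam M.base c (b (n + 1)) (a n)) (fun _ _ => M.zero)
    with hW'
  have hWg : ∀ n, W (g n) = M.pairFam M.base c (b n) (a n) := fun n =>
    g.injective.extend_apply _ _ _
  have hWg' : ∀ n, W' (g n) = M.pairFam M.base c (b (n + 1)) (a n) := fun n =>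
    g.injective.extend_apply _ _ _
  have hWo : ∀ k, (¬ ∃ n, g n = k) → W k = fun _ => M.zero := fun k hk =>
    Function.extend_apply' _ _ _ hk
  have hWo' : ∀ k, (¬ ∃ n, g n = k) → W' k = fun _ => M.zero := fun k hk =>
    Function.extend_apply' _ _ _ hk
  have hG : Function.extend ⇑g (fun n => M.add (b n) (a n)) (fun _ => M.zero)
      = fun k => M.sum (W k) := by
    funext k
    by_cases h1 : ∃ n, g n = k
    · obtain ⟨n, rfl⟩ := h1
      rw [g.injective.extend_apply, hWg]
      rfl
    · rw [Function.extend_apply' _ _ _ h1, hWo k h1]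
      exact (M.sum_const_zero).symm
  have hG' : Function.extend ⇑g (fun n => M.add (b (n + 1)) (a n)) (fun _ => M.zero)
      = fun k => M.sum (W' k) := by
    funext k
    by_cases h1 : ∃ n, g n = k
    · obtain ⟨n, rfl⟩ := h1
      rw [g.injective.extend_apply, hWg']
      rfl
    · rw [Function.extend_apply' _ _ _ h1, hWo' k h1]
      exact (M.sum_const_zero).symm
  rw [hG, hG']
  have e := prodEquiv ι
  have h2 := M.sum_flatten (fun p => W p.1 p.2) e
  have h2' := M.sum_flatten (fun p => W' p.1 p.2) e
  -- the permutation of `ι × ι`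
  set h : ℕ ⊕ ℕ → ι × ι :=
    Sum.elim (fun n => (g n, M.base)) (fun n => (g n, q)) with hhdef
  have hinj : Function.Injective h := by
    rintro (n | n) (m | m) hnm <;> simp only [hhdef, Sum.elim_inl, Sum.elim_inr,
      Prod.mk.injEq] at hnm
    · rw [g.injective hnm.1]
    · exact absurd hnm.2 hqb.symm
    · exact absurd hnm.2 hqb
    · rw [g.injective hnm.1]
  set φ : (ℕ ⊕ ℕ) ≃ Set.range h := Equiv.ofInjective h hinj with hφdef
  set τ : Equiv.Perm (ι × ι) := shiftPerm.extendDomain φ with hτdef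
  have hτa : ∀ s, τ (h s) = h (shiftPerm s) := by
    intro s
    have h1 := shiftPerm.extendDomain_apply_image φ s
    simpa [hφdef] using h1
  have hτo : ∀ p, p ∉ Set.range h → τ p = p := by
    intro p hp
    exact shiftPerm.extendDomain_apply_not_subtype φ hp
  have hWW : ∀ p : ι × ι, W' p.1 p.2 = W (τ p).1 (τ p).2 := by
    intro p
    by_cases hp : p ∈ Set.range h
    · obtain ⟨s, rfl⟩ := hp
      rw [hτa]
      rcases s with n | n
      · -- p = (g n, base)
        show W' (g n) M.base = W (g (n + 1)) M.base
        rw [hWg', hWg]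
        simp [pairFam]
      · rcases n with _ | n
        · -- p = (g 0, q)
          show W' (g 0) q = W (g 0) M.base
          rw [hWg', hWg]
          simp [pairFam, hqb, hqc, hb0]
        · -- p = (g (n+1), q)
          show W' (g (n + 1)) q = W (g n) q
          rw [hWg', hWg]
          simp [pairFam, hqb, hqc]
    · rw [hτo p hp]
      obtain ⟨k, l⟩ := p
      by_cases h1 : ∃ n, g n = k
      · obtain ⟨n, rfl⟩ := h1
        have hl1 : l ≠ M.base := by
          intro h'
          exact hp ⟨Sum.inl n, by simp [hhdef, h']⟩
        have hl2 : l ≠ q := by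
          intro h'
          exact hp ⟨Sum.inr n, by simp [hhdef, h']⟩
        show W' (g n) l = W (g n) l
        rw [hWg', hWg]
        simp [pairFam, hl1]
      · show W' k l = W k l
        rw [hWo k h1, hWo' k h1]
  set ρ : Equiv.Perm ι := e.symm.trans (τ.trans e) with hρdef
  have h3 := M.sum_comp_perm ρ (fun k => W (e.symm k).1 (e.symm k).2)
  have h4 : (fun k => W (e.symm (ρ k)).1 (e.symm (ρ k)).2)
      = fun k => W' (e.symm k).1 (e.symm k).2 := by
    funext k
    have h5 : e.symm (ρ k) = τ (e.symm k) := by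
      simp [hρdef]
    rw [h5]
    exact (hWW (e.symm k)).symm
  rw [h4] at h3
  exact h2.trans (h3.symm.trans h2'.symm)

end KappaMonoid

/-- Lemma 3.5(4): for an uncountable regular cardinal `λ`, two families over a
λ⁻-submonoid `X` are λ⁻-braided if and only if there are indexed partitions of `ι`
with blocks of cardinality `< λ` on which the corresponding partial sums agree. -/
theorem braided_iff_partition {ι : Type u} {H : Type v} [Infinite ι] [LinearOrder ι]
    [SuccOrder ι] [NoMaxOrder ι] [WellFoundedLT ι]
    (M : KappaMonoid ι H) (lam : Cardinal.{u}) (hreg : lam.IsRegular)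
    (huncount : Cardinal.aleph0 < lam)
    (X : Set H) (hX : M.IsSubmonoidLT lam X)
    (x y : ι → H) (hx : ∀ i, x i ∈ X) (hy : ∀ i, y i ∈ X) :
    M.Braided lam X x y ↔
      ∃ (I J : ι → Set ι), IsIndexedPartition I ∧ IsIndexedPartition J ∧
        (∀ μ, Cardinal.mk (I μ) < lam) ∧ (∀ μ, Cardinal.mk (J μ) < lam) ∧
        ∀ μ, M.sumOn (I μ) x = M.sumOn (J μ) y := by
  classical
  constructor
  · rintro ⟨I, J, u, v, hIpart, hJpart, hIcard, hJcard, huX, hvX, hvlim, hIx, hJy⟩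
    set g : ℕ ↪ ι := Infinite.natEmbedding ι with hgdef
    have hiter_inj : ∀ μ : ι, Function.Injective fun n : ℕ => (Order.succ)^[n] μ :=
      fun μ => (succ_iterate_strictMono μ).injective
    set I' : ι → Set ι := fun μ =>
      if IsLimitElt μ then ⋃ n : ULift.{u} ℕ, I ((Order.succ)^[n.down] μ) else ∅ with hI'def
    set J' : ι → Set ι := fun μ =>
      if IsLimitElt μ then ⋃ n : ULift.{u} ℕ, J ((Order.succ)^[n.down] μ) else ∅ with hJ'def
    have hpart' : ∀ K : ι → Set ι, IsIndexedPartition K →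
        IsIndexedPartition (fun μ =>
          if IsLimitElt μ then ⋃ n : ULift.{u} ℕ, K ((Order.succ)^[n.down] μ) else ∅) := by
      intro K hK
      constructor
      · intro μ ν hμν
        by_cases hμ : IsLimitElt μ
        · by_cases hν : IsLimitElt ν
          · simp only [if_pos hμ, if_pos hν]
            rw [Set.disjoint_left]
            intro j hj hj'
            obtain ⟨n, hn⟩ := Set.mem_iUnion.mp hj
            obtain ⟨n', hn'⟩ := Set.mem_iUnion.mp hj'
            by_cases he : (Order.succ)^[n.down] μ = (Order.succ)^[n'.down] ν
            · exact hμν (orbit_unique _ _ _ _ hμ hν he).1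
            · exact Set.disjoint_left.mp (hK.1 _ _ he) hn hn'
          · simp only [if_neg hν]
            exact Set.disjoint_empty _
        · simp only [if_neg hμ]
          exact Set.empty_disjoint _
      · apply Set.eq_univ_of_forall
        intro j
        have hj : j ∈ ⋃ μ, K μ := hK.2 ▸ Set.mem_univ j
        obtain ⟨μ₀, hμ₀⟩ := Set.mem_iUnion.mp hj
        obtain ⟨μ, n, hlim, hiter⟩ := orbit_exists μ₀
        refine Set.mem_iUnion.mpr ⟨μ, ?_⟩
        simp only [if_pos hlim]
        exact Set.mem_iUnion.mpr ⟨⟨n⟩, by rw [hiter]; exact hμ₀⟩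
    have hcard' : ∀ K : ι → Set ι, (∀ μ, Cardinal.mk (K μ) < lam) → ∀ μ, Cardinal.mk
        ↥(if IsLimitElt μ then ⋃ n : ULift.{u} ℕ, K ((Order.succ)^[n.down] μ) else ∅)
          < lam := by
      intro K hKc μ
      by_cases hμ : IsLimitElt μ
      · rw [if_pos hμ]
        refine lt_of_le_of_lt (Cardinal.mk_iUnion_le _) ?_
        have hℵ : Cardinal.mk (ULift.{u} ℕ) = Cardinal.aleph0 := Cardinal.mk_denumerable _
        apply Cardinal.mul_lt_of_lt hreg.aleph0_le
        · rw [hℵ]; exact huncount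
        · exact Cardinal.iSup_lt_of_isRegular hreg (by rw [hℵ]; exact huncount)
            fun n => hKc _
      · rw [if_neg hμ]
        rw [Cardinal.mk_emptyCollection]
        exact Cardinal.aleph0_pos.trans huncount
    refine ⟨I', J', hpart' I hIpart, hpart' J hJpart, hcard' I hIcard, hcard' J hJcard, ?_⟩
    intro μ
    by_cases hμ : IsLimitElt μ
    · have hI'μ : I' μ = ⋃ n : ULift.{u} ℕ, I ((Order.succ)^[n.down] μ) := by
        simp only [hI'def, if_pos hμ]
      have hJ'μ : J' μ = ⋃ n : ULift.{u} ℕ, J ((Order.succ)^[n.down] μ) := by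
        simp only [hJ'def, if_pos hμ]
      have hdisjI : ∀ n m : ℕ, n ≠ m →
          Disjoint (I ((Order.succ)^[n] μ)) (I ((Order.succ)^[m] μ)) := fun n m hnm =>
        hIpart.1 _ _ (fun he => hnm (hiter_inj μ he))
      have hdisjJ : ∀ n m : ℕ, n ≠ m →
          Disjoint (J ((Order.succ)^[n] μ)) (J ((Order.succ)^[m] μ)) := fun n m hnm =>
        hJpart.1 _ _ (fun he => hnm (hiter_inj μ he))
      rw [hI'μ, hJ'μ, M.sum_extend_blocks g _ hdisjI x, M.sum_extend_blocks g _ hdisjJ y]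
      have hfI : (fun n : ℕ => M.sumOn (I ((Order.succ)^[n] μ)) x)
          = fun n => M.add (v ((Order.succ)^[n] μ)) (u ((Order.succ)^[n] μ)) :=
        funext fun n => hIx _
      have hfJ : (fun n : ℕ => M.sumOn (J ((Order.succ)^[n] μ)) y)
          = fun n => M.add (v ((Order.succ)^[n + 1] μ)) (u ((Order.succ)^[n] μ)) :=
        funext fun n => by rw [hJy, Function.iterate_succ_apply']
      rw [hfI, hfJ]
      exact M.sum_shift g (fun n => u ((Order.succ)^[n] μ)) (fun n => v ((Order.succ)^[n] μ))
        (by simpa using hvlim μ hμ)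
    · have h1 : I' μ = ∅ := by simp only [hI'def, if_neg hμ]
      have h2 : J' μ = ∅ := by simp only [hJ'def, if_neg hμ]
      rw [h1, h2, M.sumOn_empty, M.sumOn_empty]
  · rintro ⟨I, J, hIp, hJp, hIc, hJc, hsum⟩
    have hmem : ∀ (s : Set ι) (z : ι → H), (∀ i, z i ∈ X) → Cardinal.mk s < lam →
        M.sumOn s z ∈ X := by
      intro s z hz hs
      refine hX.2 (fun i => if i ∈ s then z i else M.zero) (fun i => ?_) ?_
      · show (if i ∈ s then z i else M.zero) ∈ X
        by_cases hi : i ∈ s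
        · rw [if_pos hi]; exact hz i
        · rw [if_neg hi]; exact hX.1
      · refine lt_of_le_of_lt (Cardinal.mk_le_mk_of_subset ?_) hs
        intro i hi
        by_contra his
        exact hi (if_neg his)
    refine ⟨I, J, fun μ => M.sumOn (I μ) x, fun _ => M.zero, hIp, hJp, hIc, hJc,
      fun μ => hmem _ _ hx (hIc μ), fun _ => hX.1, fun _ _ => rfl,
      fun μ => (M.add_zero_left _).symm, fun μ => ?_⟩
    rw [M.add_zero_left]
    exact (hsum μ).symm
end

section
/- Let H = {(n,n) : n ∈ ℕ} ⊆ ℕ². The universal ℵ₀-extension of H is Ĥ = {(n,n) : n ∈ ℕ} ∪ {(ℵ₀,ℵ₀)} ⊆ F_{ℵ₀}², which is isomorphic to F_{ℵ₀} = ℕ ∪ {ℵ₀}. In particular, Ĥ is a proper ℵ₀-submonoid of the solution set in F_{ℵ₀}² of the equation 2x = x + y, which also contains all (ℵ₀, n) for n ∈ ℕ. -/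
open scoped Classical

universe u v w

/-! An `ℵ₀`-sum of diagonal elements `(m k, m k)` is `(s, s)` with `s = ∑ m k ∈ ℕ ∪ {ℵ₀}`, and
every `s` arises, so `Ĥ` is the diagonal copy of `F_{ℵ₀}`; `(ℵ₀, 0)` solves `2x = x + y` off it.
For braiding two families `a`, `b` of naturals with equal sums, cut `ℕ` at interleaved points
`i₀ < i₁ < ⋯` and `j₀ < j₁ < ⋯` with `P (i μ) ≤ Q (j μ) ≤ P (i (μ + 1))` for the prefix sums `P`, `Q`.
Such cuts exist because in `F_{ℵ₀}` the prefix sums eventually reach every natural number below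
their total, which is either attained or `ℵ₀`. -/

open Finset Filter Function

namespace ENat

variable {ι : Type*}

theorem summable (f : ι → ℕ∞) : Summable f :=
  (hasSum_of_isLUB _ isLUB_iSup).summable

theorem hasSum_prodMk (x : ι → ℕ∞ × ℕ∞) : HasSum x (∑' i, (x i).1, ∑' i, (x i).2) :=
  (summable _).hasSum.prodMk (summable _).hasSum

theorem tsum_eq_top_of_support_infinite {f : ι → ℕ∞} (hf : (support f).Infinite) :
    ∑' i, f i = ⊤ := by
  refine eq_top_iff_forall_ge.2 fun n => ?_
  obtain ⟨s, hs, rfl⟩ := hf.exists_subset_card_eq n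
  calc (#s : ℕ∞) = ∑ _i ∈ s, 1 := by simp
    _ ≤ ∑ i ∈ s, f i := sum_le_sum fun i hi => Order.one_le_iff_ne_zero.2 (hs hi)
    _ ≤ ∑' i, f i := (summable f).sum_le_tsum s fun _ _ => zero_le

theorem exists_tsum_natCast_eq (s : ℕ∞) : ∃ a : ℕ → ℕ, ∑' k, (a k : ℕ∞) = s := by
  induction s using recTopCoe with
  | top =>
    exact ⟨fun _ => 1, tsum_eq_top_of_support_infinite (by simp [support_const, Set.infinite_univ])⟩
  | coe n => exact ⟨Pi.single 0 n, by rw [tsum_eq_single 0 (by simp +contextual)]; simp⟩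

theorem eventually_le_sum_range {f : ℕ → ℕ∞} {C : ℕ} (h : (C : ℕ∞) ≤ ∑' k, f k) :
    ∀ᶠ n in atTop, (C : ℕ∞) ≤ ∑ k ∈ range n, f k := by
  cases C with
  | zero => simp
  | succ c =>
    have hlt : (c : ℕ∞) < ∑' k, f k := (add_one_le_iff (natCast_ne_top c)).1 (by exact_mod_cast h)
    filter_upwards [(summable f).hasSum.tendsto_sum_nat.eventually (Ioi_mem_nhds hlt)] with n hn
    exact_mod_cast (add_one_le_iff (natCast_ne_top c)).2 hn

theorem sum_range_le_tsum_natCast (a : ℕ → ℕ) (n : ℕ) :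
    ((∑ k ∈ range n, a k : ℕ) : ℕ∞) ≤ ∑' k, (a k : ℕ∞) := by
  push_cast
  exact (summable _).sum_le_tsum _ fun _ _ => zero_le

theorem exists_lt_le_sum_range_natCast {a : ℕ → ℕ} {C : ℕ} (h : (C : ℕ∞) ≤ ∑' k, (a k : ℕ∞))
    (N : ℕ) : ∃ n, N < n ∧ C ≤ ∑ k ∈ range n, a k :=
  ((eventually_le_sum_range h).and (eventually_gt_atTop N)).exists.imp
    fun _ hn => ⟨hn.2, by exact_mod_cast hn.1⟩

theorem range_diag : Set.range (fun z : ℕ∞ => (z, z)) =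
    {z | ∃ m : ℕ, z = ((m : ℕ∞), (m : ℕ∞))} ∪ {(⊤, ⊤)} := by
  ext w
  constructor
  · rintro ⟨z, rfl⟩
    induction z using recTopCoe with
    | top => exact Or.inr rfl
    | coe n => exact Or.inl ⟨n, rfl⟩
  · rintro (⟨m, rfl⟩ | rfl)
    exacts [⟨m, rfl⟩, ⟨⊤, rfl⟩]

end ENat

theorem exists_interleaving {a b : ℕ → ℕ} (h : ∑' k, (a k : ℕ∞) = ∑' k, (b k : ℕ∞)) :
    ∃ i j : ℕ → ℕ, StrictMono i ∧ StrictMono j ∧ i 0 = 0 ∧ j 0 = 0 ∧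
      ∀ μ, ∑ k ∈ range (i μ), a k ≤ ∑ k ∈ range (j μ), b k ∧
        ∑ k ∈ range (j μ), b k ≤ ∑ k ∈ range (i (μ + 1)), a k := by
  have step : ∀ p : ℕ × ℕ, ∃ q : ℕ × ℕ, p.1 < q.1 ∧ p.2 < q.2 ∧
      ∑ k ∈ range p.2, b k ≤ ∑ k ∈ range q.1, a k ∧
      ∑ k ∈ range q.1, a k ≤ ∑ k ∈ range q.2, b k := by
    intro p
    obtain ⟨i', hi', hbi'⟩ :=
      ENat.exists_lt_le_sum_range_natCast ((ENat.sum_range_le_tsum_natCast b p.2).trans h.ge) p.1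
    obtain ⟨j', hj', haj'⟩ :=
      ENat.exists_lt_le_sum_range_natCast ((ENat.sum_range_le_tsum_natCast a i').trans h.le) p.2
    exact ⟨(i', j'), hi', hj', hbi', haj'⟩
  choose next hnext using step
  let c : ℕ → ℕ × ℕ := fun μ => next^[μ] (0, 0)
  have hc : ∀ μ, c (μ + 1) = next (c μ) := fun μ => iterate_succ_apply' next μ (0, 0)
  refine ⟨fun μ => (c μ).1, fun μ => (c μ).2, strictMono_nat_of_lt_succ fun μ => ?_,
    strictMono_nat_of_lt_succ fun μ => ?_, rfl, rfl, fun μ => ⟨?_, ?_⟩⟩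
  · exact hc μ ▸ (hnext (c μ)).1
  · exact hc μ ▸ (hnext (c μ)).2.1
  · cases μ with
    | zero => simp [c]
    | succ μ => simpa only [hc] using (hnext (c μ)).2.2.2
  · simpa only [hc] using (hnext (c μ)).2.2.1

theorem isIndexedPartition_Ico_succ {ι : Type*} [LinearOrder ι] [OrderBot ι] [SuccOrder ι]
    [IsSuccArchimedean ι] {f : ι → ι} (hf : Monotone f) (hbot : f ⊥ = ⊥)
    (hunbdd : ¬BddAbove (Set.range f)) :
    IsIndexedPartition fun a => Set.Ico (f a) (f (Order.succ a)) :=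
  ⟨fun _ _ h => hf.pairwise_disjoint_on_Ico_succ h, by
    rw [iUnion_Ico_map_succ_eq_Ici (fun _ => hf bot_le) hunbdd, hbot, Set.Ici_bot]⟩

theorem Nat.eq_zero_of_isLimitElt {μ : ℕ} (h : IsLimitElt μ) : μ = 0 := by
  by_contra hμ
  exact h ⟨μ - 1, by omega, by rw [Order.succ_eq_add_one]; omega⟩

namespace KappaMonoid

variable {ι : Type u} {α : Type v} [AddCommMonoid α] [TopologicalSpace α] [T3Space α]
  [ContinuousAdd α]

/-- Every family is required to be summable, so `∑'` never falls back to its junk value `0`. -/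
noncomputable def ofTsum (base : ι)
    (hs : ∀ (β : Type u) (f : β → α), Summable f) : KappaMonoid ι α where
  zero := 0
  base := base
  sum x := ∑' i, x i
  sum_single _ hx := tsum_eq_single base hx
  sum_flatten x π := by rw [← (hs _ x).tsum_prod' fun _ => hs _ _, π.symm.tsum_eq x]

variable (base : ι) (hs : ∀ (β : Type u) (f : β → α), Summable f)

theorem ofTsum_add [Nontrivial ι] (a b : α) : (ofTsum base hs).add a b = a + b := by
  have hj : Classical.choose (exists_ne base) ≠ base := Classical.choose_spec (exists_ne base)
  simp only [add, pairFam, ofTsum]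
  rw [tsum_eq_sum (s := {base, Classical.choose (exists_ne base)}) (by simp +contextual),
    sum_pair hj.symm]
  simp [hj]

theorem ofTsum_sumOn_finset (t : Finset ι) (x : ι → α) :
    (ofTsum base hs).sumOn t x = ∑ k ∈ t, x k := by
  simp only [sumOn, ofTsum, Finset.mem_coe]
  rw [tsum_eq_sum (s := t) (by simp +contextual)]
  exact sum_congr rfl fun k hk => if_pos hk

end KappaMonoid

noncomputable def enatSum : KappaMonoid ℕ ℕ∞ :=
  KappaMonoid.ofTsum 0 fun _ => ENat.summable

noncomputable def enatPairSum : KappaMonoid ℕ (ℕ∞ × ℕ∞) :=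
  KappaMonoid.ofTsum 0 fun _ x => (ENat.hasSum_prodMk x).summable

theorem enatPairSum_sum (x : ℕ → ℕ∞ × ℕ∞) :
    enatPairSum.sum x = (∑' k, (x k).1, ∑' k, (x k).2) :=
  (ENat.hasSum_prodMk x).tsum_eq

theorem enatPairSum_add (a b : ℕ∞ × ℕ∞) : enatPairSum.add a b = a + b :=
  KappaMonoid.ofTsum_add _ _ a b

theorem enatPairSum_sumOn_finset (t : Finset ℕ) (x : ℕ → ℕ∞ × ℕ∞) :
    enatPairSum.sumOn t x = ∑ k ∈ t, x k :=
  KappaMonoid.ofTsum_sumOn_finset _ _ t x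

def natDiag : ℕ →+ ℕ∞ × ℕ∞ := (Nat.castAddMonoidHom ℕ∞).prod (Nat.castAddMonoidHom ℕ∞)

theorem enatPairSum_sumOn_Ico (c : ℕ → ℕ) {m n : ℕ} (hmn : m ≤ n) :
    enatPairSum.sumOn (Set.Ico m n) (fun k => natDiag (c k)) =
      natDiag (∑ k ∈ range n, c k - ∑ k ∈ range m, c k) := by
  rw [← Finset.coe_Ico, enatPairSum_sumOn_finset, ← map_sum,
    ← Finset.sum_range_add_sum_Ico c hmn, Nat.add_sub_cancel_left]

def natDiagonal : Set (ℕ∞ × ℕ∞) := {z | ∃ m : ℕ, z = ((m : ℕ∞), (m : ℕ∞))}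

theorem enatPairSum_braided_natDiagonal {x y : ℕ → ℕ∞ × ℕ∞} (hx : ∀ k, x k ∈ natDiagonal)
    (hy : ∀ k, y k ∈ natDiagonal) (hxy : enatPairSum.sum x = enatPairSum.sum y) :
    enatPairSum.Braided Cardinal.aleph0 natDiagonal x y := by
  choose a ha using hx
  choose b hb using hy
  obtain rfl : x = fun k => natDiag (a k) := funext ha
  obtain rfl : y = fun k => natDiag (b k) := funext hb
  have hab : ∑' k, (a k : ℕ∞) = ∑' k, (b k : ℕ∞) := by
    simpa [enatPairSum_sum, natDiag] using congrArg Prod.fst hxy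
  obtain ⟨i, j, hi, hj, hi0, hj0, hle⟩ := exists_interleaving hab
  -- With `P`, `Q` the prefix sums of `a`, `b`, the braiding terms are the overlaps
  -- `v μ = Q (j μ) - P (i μ)` and `u μ = P (i (μ + 1)) - Q (j μ)`, exact by the interleaving.
  refine ⟨fun μ => Set.Ico (i μ) (i (Order.succ μ)), fun μ => Set.Ico (j μ) (j (Order.succ μ)),
    fun μ => natDiag (∑ k ∈ range (i (μ + 1)), a k - ∑ k ∈ range (j μ), b k),
    fun μ => natDiag (∑ k ∈ range (j μ), b k - ∑ k ∈ range (i μ), a k),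
    isIndexedPartition_Ico_succ hi.monotone hi0 hi.not_bddAbove_range_of_isSuccArchimedean,
    isIndexedPartition_Ico_succ hj.monotone hj0 hj.not_bddAbove_range_of_isSuccArchimedean,
    fun _ => (Set.finite_Ico _ _).lt_aleph0, fun _ => (Set.finite_Ico _ _).lt_aleph0,
    fun _ => ⟨_, rfl⟩, fun _ => ⟨_, rfl⟩, fun μ hμ => ?_, fun μ => ?_, fun μ => ?_⟩
  · obtain rfl := Nat.eq_zero_of_isLimitElt hμ
    simp [hi0, hj0, enatPairSum, KappaMonoid.ofTsum]
  · rw [enatPairSum_sumOn_Ico _ (hi.monotone (Order.le_succ μ)), enatPairSum_add, ← map_add]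
    have := hle μ
    congr 1
    rw [Order.succ_eq_add_one]
    omega
  · rw [enatPairSum_sumOn_Ico _ (hj.monotone (Order.le_succ μ)), enatPairSum_add, ← map_add]
    have := hle μ
    have := hle (μ + 1)
    congr 1
    rw [Order.succ_eq_add_one]
    omega

theorem enatPairSum_sums_of_natDiagonal :
    {h | ∃ x : ℕ → ℕ∞ × ℕ∞, (∀ k, x k ∈ natDiagonal) ∧ enatPairSum.sum x = h} =
      Set.range fun z : ℕ∞ => (z, z) := by
  ext h
  constructor
  · rintro ⟨x, hx, rfl⟩
    choose a ha using hx
    obtain rfl : x = fun k => natDiag (a k) := funext ha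
    exact ⟨_, (enatPairSum_sum fun k => natDiag (a k)).symm⟩
  · rintro ⟨z, rfl⟩
    obtain ⟨a, rfl⟩ := ENat.exists_tsum_natCast_eq z
    exact ⟨_, fun k => ⟨a k, rfl⟩, enatPairSum_sum fun k => natDiag (a k)⟩

/-- Example 3.16: for `H = {(n,n) : n ∈ ℕ} ⊆ ℕ²`, the universal ℵ₀-extension is
`Ĥ = {(n,n) : n ∈ ℕ} ∪ {(ℵ₀,ℵ₀)} ⊆ F_{ℵ₀}²`, which is isomorphic (as ℵ₀-monoid) to
`F_{ℵ₀} = ℕ ∪ {ℵ₀}`; and `Ĥ` is a proper subset of the solution set of `2x = x + y`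
in `F_{ℵ₀}²`, which also contains all `(ℵ₀, n)` for `n ∈ ℕ`. -/
theorem universal_aleph0_extension_diagonal :
    ∃ (M₁ : KappaMonoid ℕ ℕ∞) (M : KappaMonoid ℕ (ℕ∞ × ℕ∞)),
      -- `M₁` is the ℵ₀-monoid `F_{ℵ₀} = ℕ ∪ {ℵ₀}`
      M₁.zero = 0 ∧
      (∀ x : ℕ → ℕ∞, (Function.support x).Finite → M₁.sum x = ∑ᶠ i, x i) ∧
      (∀ x : ℕ → ℕ∞, (Function.support x).Infinite → M₁.sum x = ⊤) ∧
      -- `M` is the ℵ₀-monoid `F_{ℵ₀}²` with componentwise summation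
      M.zero = 0 ∧
      (∀ x : ℕ → ℕ∞ × ℕ∞,
        ((Function.support fun k => (x k).1).Finite →
          (M.sum x).1 = ∑ᶠ k, (x k).1) ∧
        ((Function.support fun k => (x k).1).Infinite → (M.sum x).1 = ⊤) ∧
        ((Function.support fun k => (x k).2).Finite →
          (M.sum x).2 = ∑ᶠ k, (x k).2) ∧
        ((Function.support fun k => (x k).2).Infinite → (M.sum x).2 = ⊤)) ∧
      (letI X : Set (ℕ∞ × ℕ∞) := {z | ∃ m : ℕ, z = ((m : ℕ∞), (m : ℕ∞))}
       letI Hhat : Set (ℕ∞ × ℕ∞) :=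
         {h | ∃ x : ℕ → ℕ∞ × ℕ∞, (∀ k, x k ∈ X) ∧ M.sum x = h}
       letI Ssol : Set (ℕ∞ × ℕ∞) := {z | z.1 + z.1 = z.1 + z.2}
      -- `Ĥ` (the ℵ₀-submonoid generated by `H`) is `{(n,n)} ∪ {(∞,∞)}`
      (Hhat = {z | ∃ m : ℕ, z = ((m : ℕ∞), (m : ℕ∞))} ∪ {(⊤, ⊤)}) ∧
      -- `Ĥ` is the universal ℵ₀-extension of `H`: it is ℵ₀⁻-braided over `H`
      (∀ x y : ℕ → ℕ∞ × ℕ∞, (∀ k, x k ∈ X) → (∀ k, y k ∈ X) →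
        M.sum x = M.sum y → M.Braided Cardinal.aleph0 X x y) ∧
      -- `Ĥ ≅ F_{ℵ₀}` as ℵ₀-monoids
      (∃ f : ℕ∞ → ℕ∞ × ℕ∞, Function.Injective f ∧ Set.range f = Hhat ∧
        ∀ x : ℕ → ℕ∞, f (M₁.sum x) = M.sum fun k => f (x k)) ∧
      -- `Ĥ` is a proper subset of the solution set of `2x = x + y`
      Hhat ⊆ Ssol ∧ Hhat ≠ Ssol ∧ ∀ m : ℕ, ((⊤ : ℕ∞), (m : ℕ∞)) ∈ Ssol) := by
  refine ⟨enatSum, enatPairSum, rfl, fun x hx => tsum_eq_finsum hx,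
    fun x hx => ENat.tsum_eq_top_of_support_infinite hx, rfl, fun x => ?_, ?_⟩
  · rw [enatPairSum_sum]
    exact ⟨tsum_eq_finsum, ENat.tsum_eq_top_of_support_infinite, tsum_eq_finsum,
      ENat.tsum_eq_top_of_support_infinite⟩
  rw [show {z | ∃ m : ℕ, z = ((m : ℕ∞), (m : ℕ∞))} = natDiagonal from rfl,
    enatPairSum_sums_of_natDiagonal]
  refine ⟨ENat.range_diag, fun x y hx hy => enatPairSum_braided_natDiagonal hx hy,
    ⟨fun z => (z, z), fun _ _ h => congrArg Prod.fst h, rfl,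
      fun x => (enatPairSum_sum fun k => (x k, x k)).symm⟩, ?_, fun h => ?_, fun m => by simp⟩
  · rintro _ ⟨z, rfl⟩
    rfl
  · obtain ⟨z, hz⟩ : ((⊤ : ℕ∞), (0 : ℕ∞)) ∈ Set.range fun z : ℕ∞ => (z, z) := h ▸ by simp
    simp only [Prod.mk.injEq] at hz
    exact ENat.top_ne_zero (hz.1.symm.trans hz.2)
end
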